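/- Let r ≥ 1, m ≥ 2, and for 1 ≤ i, j ≤ m let P_{ji} : ℤ^r → ℂ be the symbols of an m×m system of Fourier multipliers on the torus 𝕋^r, with symbol matrix P(ξ) = (P_{ji}(ξ)). Assume: (a) there is a finite set F₀ ⊆ ℤ^r such that for all ξ ∈ ℤ^r \ F₀ and all 1 ≤ ℓ ≤ m, |P_{ℓℓ}(ξ)| > Σ_{i≠ℓ} |P_{ℓi}(ξ)| and |P_{ℓℓ}(ξ)| > Σ_{j≠ℓ} |P_{jℓ}(ξ)| (diagonal dominance by rows and columns); (b) there exist τ₁, …, τ_m ∈ ℝ and C' > 0 such that |P_{ℓi}(ξ)| ≤ C'(1+‖ξ‖²)^{τ_ℓ/2} and |P_{iℓ}(ξ)| ≤ C'(1+‖ξ‖²)^{τ_ℓ/2} for all ξ ∈ ℤ^r, all ℓ, and all i ≠ ℓ; (c) there exist C₁, …, C_m > 0, k₁, …, k_m ∈ ℝ with k_ℓ > τ_ℓ for each ℓ, and a finite set F₁ ⊆ ℤ^r, such that |P_{ℓℓ}(ξ)| ≥ C_ℓ(1+‖ξ‖²)^{k_ℓ/2} for all ξ ∈ ℤ^r \ F₁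 and all ℓ. Then for every u : ℤ^r → ℂ^m of polynomial growth such that ξ ↦ P(ξ)u(ξ) is rapidly decreasing, u is itself rapidly decreasing (i.e. the system is globally hypoelliptic). -/

import Mathlib

noncomputable section

open scoped BigOperators

/-- Euclidean (ℓ²) norm of a complex vector. -/
def l2norm {n : Type*} [Fintype n] (v : n → ℂ) : ℝ :=
  Real.sqrt (∑ i, ‖v i‖ ^ 2)

/-- The weight `1 + ‖ξ‖²` for a frequency `ξ ∈ ℤ^r`. -/
def wt {r : ℕ} (ξ : Fin r → ℤ) : ℝ :=
  1 + ∑ i, ((ξ i : ℝ)) ^ 2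

/-- A vector-valued sequence indexed by `ℤ^r` is rapidly decreasing. -/
def RapidDecayV {r n : ℕ} (u : (Fin r → ℤ) → (Fin n → ℂ)) : Prop :=
  ∀ M : ℝ, 0 < M → ∃ C : ℝ, 0 < C ∧ ∀ ξ, l2norm (u ξ) ≤ C * wt ξ ^ (-(M / 2))

/-- A vector-valued sequence indexed by `ℤ^r` has polynomial growth. -/
def PolyGrowthV {r n : ℕ} (u : (Fin r → ℤ) → (Fin n → ℂ)) : Prop :=
  ∃ C N : ℝ, 0 < C ∧ 0 < N ∧ ∀ ξ, l2norm (u ξ) ≤ C * wt ξ ^ (N / 2)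

lemma one_le_wt {r : ℕ} (ξ : Fin r → ℤ) : 1 ≤ wt ξ := by
  unfold wt
  have : (0:ℝ) ≤ ∑ i, ((ξ i : ℝ))^2 := Finset.sum_nonneg fun i _ => sq_nonneg _
  linarith

lemma wt_pos {r : ℕ} (ξ : Fin r → ℤ) : 0 < wt ξ := lt_of_lt_of_le one_pos (one_le_wt ξ)

lemma wt_rpow_pos {r : ℕ} (ξ : Fin r → ℤ) (a : ℝ) : 0 < wt ξ ^ a :=
  Real.rpow_pos_of_pos (wt_pos ξ) a

lemma l2norm_nonneg {n : Type*} [Fintype n] (v : n → ℂ) : 0 ≤ l2norm v := Real.sqrt_nonneg _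

lemma norm_le_l2norm {n : Type*} [Fintype n] (v : n → ℂ) (i : n) : ‖v i‖ ≤ l2norm v := by
  have h1 : ‖v i‖ = Real.sqrt (‖v i‖ ^ 2) := (Real.sqrt_sq (norm_nonneg _)).symm
  rw [h1]
  exact Real.sqrt_le_sqrt (Finset.single_le_sum (fun j _ => sq_nonneg ‖v j‖) (Finset.mem_univ i))

lemma l2norm_le_sum {n : Type*} [Fintype n] (v : n → ℂ) : l2norm v ≤ ∑ i, ‖v i‖ := by
  have h : ∑ i, ‖v i‖ ^ 2 ≤ (∑ i, ‖v i‖) ^ 2 :=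
    Finset.sum_sq_le_sq_sum_of_nonneg (fun i _ => norm_nonneg _)
  calc l2norm v ≤ Real.sqrt ((∑ i, ‖v i‖)^2) := Real.sqrt_le_sqrt h
    _ = ∑ i, ‖v i‖ := Real.sqrt_sq (Finset.sum_nonneg fun i _ => norm_nonneg _)

lemma wt_rpow_le {r : ℕ} (ξ : Fin r → ℤ) {a b : ℝ} (h : a ≤ b) : wt ξ ^ a ≤ wt ξ ^ b :=
  Real.rpow_le_rpow_of_exponent_le (one_le_wt ξ) h

lemma off_finite {r m : ℕ} (u : (Fin r → ℤ) → Fin m → ℂ) (S : Set (Fin r → ℤ))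
    (hS : S.Finite) (t C : ℝ) (hC : 0 < C)
    (h : ∀ ξ, ξ ∉ S → l2norm (u ξ) ≤ C * wt ξ ^ t) :
    ∃ C2 : ℝ, 0 < C2 ∧ ∀ ξ, l2norm (u ξ) ≤ C2 * wt ξ ^ t := by
  classical
  refine ⟨C + ∑ ξ ∈ hS.toFinset, l2norm (u ξ) * wt ξ ^ (-t), ?_, ?_⟩
  · have : 0 ≤ ∑ ξ ∈ hS.toFinset, l2norm (u ξ) * wt ξ ^ (-t) :=
      Finset.sum_nonneg fun ξ _ => mul_nonneg (l2norm_nonneg _) (wt_rpow_pos ξ _).le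
    linarith
  · intro ξ
    by_cases hξ : ξ ∈ S
    · have hmem : ξ ∈ hS.toFinset := hS.mem_toFinset.mpr hξ
      have h1 : l2norm (u ξ) * wt ξ ^ (-t) ≤ ∑ η ∈ hS.toFinset, l2norm (u η) * wt η ^ (-t) :=
        Finset.single_le_sum (fun η _ => mul_nonneg (l2norm_nonneg _)
          (wt_rpow_pos η _).le) hmem
      have h2 : l2norm (u ξ) = l2norm (u ξ) * wt ξ ^ (-t) * wt ξ ^ t := by
        rw [mul_assoc, ← Real.rpow_add (wt_pos ξ)]
        simp
      rw [h2]
      have hwt : 0 ≤ wt ξ ^ t := (wt_rpow_pos ξ _).le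
      nlinarith [h1, hwt, hC]
    · have hb := h ξ hξ
      have hwt : 0 ≤ wt ξ ^ t := (wt_rpow_pos ξ _).le
      have hsum : 0 ≤ ∑ η ∈ hS.toFinset, l2norm (u η) * wt η ^ (-t) :=
        Finset.sum_nonneg fun η _ => mul_nonneg (l2norm_nonneg _) (wt_rpow_pos η _).le
      nlinarith

theorem diag_dominant_system_GH (r m : ℕ) (hr : 1 ≤ r) (hm : 2 ≤ m)
    (P : Fin m → Fin m → (Fin r → ℤ) → ℂ)
    -- (a) diagonal dominance by rows and columns outside a finite set
    (F₀ : Set (Fin r → ℤ)) (hF₀ : F₀.Finite)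
    (hdom : ∀ ξ, ξ ∉ F₀ → ∀ ℓ : Fin m,
      (∑ i ∈ Finset.univ.erase ℓ, ‖P ℓ i ξ‖) < ‖P ℓ ℓ ξ‖ ∧
      (∑ j ∈ Finset.univ.erase ℓ, ‖P j ℓ ξ‖) < ‖P ℓ ℓ ξ‖)
    -- (b) polynomial bounds on the off-diagonal entries
    (τ : Fin m → ℝ) (C' : ℝ) (hC' : 0 < C')
    (hoff : ∀ ξ, ∀ ℓ i : Fin m, i ≠ ℓ →
      ‖P ℓ i ξ‖ ≤ C' * wt ξ ^ (τ ℓ / 2) ∧ ‖P i ℓ ξ‖ ≤ C' * wt ξ ^ (τ ℓ / 2))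
    -- (c) lower bounds with larger exponents on the diagonal entries
    (Cdiag : Fin m → ℝ) (hCdiag : ∀ ℓ, 0 < Cdiag ℓ)
    (k : Fin m → ℝ) (hk : ∀ ℓ, τ ℓ < k ℓ)
    (F₁ : Set (Fin r → ℤ)) (hF₁ : F₁.Finite)
    (hdiag : ∀ ξ, ξ ∉ F₁ → ∀ ℓ : Fin m, ‖P ℓ ℓ ξ‖ ≥ Cdiag ℓ * wt ξ ^ (k ℓ / 2)) :
    ∀ u : (Fin r → ℤ) → (Fin m → ℂ), PolyGrowthV u →
      RapidDecayV (fun ξ => (Matrix.of fun j i => P j i ξ).mulVec (u ξ)) →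
        RapidDecayV u := by
  classical
  intro u hpoly hPu
  obtain ⟨C0, N, hC0, hN, hu0⟩ := hpoly
  haveI : NeZero m := ⟨by omega⟩
  have hne : (Finset.univ : Finset (Fin m)).Nonempty := Finset.univ_nonempty
  set δ : ℝ := Finset.univ.inf' hne (fun ℓ => (k ℓ - τ ℓ) / 2) with hδdef
  have hδpos : 0 < δ := by
    rw [hδdef, Finset.lt_inf'_iff]
    intro ℓ _
    have := hk ℓ; linarith
  have hδle : ∀ ℓ, δ ≤ (k ℓ - τ ℓ) / 2 := fun ℓ =>
    Finset.inf'_le _ (Finset.mem_univ ℓ)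
  set Cm : ℝ := Finset.univ.inf' hne Cdiag with hCmdef
  have hCm : 0 < Cm := by
    rw [hCmdef, Finset.lt_inf'_iff]
    intro ℓ _; exact hCdiag ℓ
  have hCmle : ∀ ℓ, Cm ≤ Cdiag ℓ := fun ℓ => Finset.inf'_le _ (Finset.mem_univ ℓ)
  have hmpos : (0:ℝ) < (m:ℝ) := by exact_mod_cast Nat.lt_of_lt_of_le two_pos hm
  -- the bootstrap step
  have step : ∀ t C : ℝ, 0 < C → (∀ ξ, l2norm (u ξ) ≤ C * wt ξ ^ t) →
      ∃ C2 : ℝ, 0 < C2 ∧ ∀ ξ, l2norm (u ξ) ≤ C2 * wt ξ ^ (t - δ) := by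
    intro t C hC hCu
    set t' : ℝ := t - δ with ht'
    set M : ℝ := 1 + ∑ ℓ : Fin m, |2 * t' + k ℓ| with hMdef
    have hM : 0 < M := by
      have : (0:ℝ) ≤ ∑ ℓ : Fin m, |2 * t' + k ℓ| :=
        Finset.sum_nonneg fun ℓ _ => abs_nonneg _
      rw [hMdef]; linarith
    obtain ⟨D, hD, hDle⟩ := hPu M hM
    set B : ℝ := (m : ℝ) * C' * C with hBdef
    have hB : 0 < B := by positivity
    have hDB : (0:ℝ) < (m : ℝ) * ((D + B) / Cm) := by positivity
    refine off_finite u (F₀ ∪ F₁) (hF₀.union hF₁) t' ((m : ℝ) * ((D + B) / Cm)) hDB ?_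
    intro ξ hξ
    have hξ1 : ξ ∉ F₁ := fun h => hξ (Set.mem_union_right _ h)
    -- componentwise bound
    have comp : ∀ ℓ : Fin m, ‖u ξ ℓ‖ ≤ (D + B) / Cm * wt ξ ^ t' := by
      intro ℓ
      have hw : (0:ℝ) < wt ξ ^ (k ℓ / 2) := wt_rpow_pos ξ _
      have hsplit : P ℓ ℓ ξ * u ξ ℓ =
          ((Matrix.of fun j i => P j i ξ).mulVec (u ξ)) ℓ
            - ∑ i ∈ Finset.univ.erase ℓ, P ℓ i ξ * u ξ i := by
        have hsum : P ℓ ℓ ξ * u ξ ℓ + ∑ i ∈ Finset.univ.erase ℓ, P ℓ i ξ * u ξ i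
            = ∑ i : Fin m, P ℓ i ξ * u ξ i :=
          Finset.add_sum_erase _ (fun i => P ℓ i ξ * u ξ i) (Finset.mem_univ ℓ)
        have hmv : ((Matrix.of fun j i => P j i ξ).mulVec (u ξ)) ℓ
            = ∑ i : Fin m, P ℓ i ξ * u ξ i := by
          simp [Matrix.mulVec, dotProduct]
        rw [hmv, ← hsum]; ring
      have hnorm1 : ‖P ℓ ℓ ξ‖ * ‖u ξ ℓ‖ ≤
          l2norm ((Matrix.of fun j i => P j i ξ).mulVec (u ξ))
            + ∑ i ∈ Finset.univ.erase ℓ, ‖P ℓ i ξ‖ * ‖u ξ i‖ := by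
        rw [← norm_mul, hsplit]
        calc ‖_ - _‖ ≤ ‖((Matrix.of fun j i => P j i ξ).mulVec (u ξ)) ℓ‖
              + ‖∑ i ∈ Finset.univ.erase ℓ, P ℓ i ξ * u ξ i‖ := norm_sub_le _ _
          _ ≤ l2norm ((Matrix.of fun j i => P j i ξ).mulVec (u ξ))
              + ∑ i ∈ Finset.univ.erase ℓ, ‖P ℓ i ξ‖ * ‖u ξ i‖ := by
            gcongr
            · exact norm_le_l2norm _ ℓ
            · calc ‖∑ i ∈ Finset.univ.erase ℓ, P ℓ i ξ * u ξ i‖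
                  ≤ ∑ i ∈ Finset.univ.erase ℓ, ‖P ℓ i ξ * u ξ i‖ := norm_sum_le _ _
                _ = ∑ i ∈ Finset.univ.erase ℓ, ‖P ℓ i ξ‖ * ‖u ξ i‖ := by
                  simp [norm_mul]
      have hsum2 : ∑ i ∈ Finset.univ.erase ℓ, ‖P ℓ i ξ‖ * ‖u ξ i‖
          ≤ B * wt ξ ^ (τ ℓ / 2 + t) := by
        have hterm : ∀ i ∈ Finset.univ.erase ℓ,
            ‖P ℓ i ξ‖ * ‖u ξ i‖ ≤ (C' * wt ξ ^ (τ ℓ / 2)) * (C * wt ξ ^ t) := by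
          intro i hi
          have hiℓ : i ≠ ℓ := Finset.ne_of_mem_erase hi
          have h1 := (hoff ξ ℓ i hiℓ).1
          have h2 : ‖u ξ i‖ ≤ C * wt ξ ^ t := (norm_le_l2norm _ i).trans (hCu ξ)
          exact mul_le_mul h1 h2 (norm_nonneg _)
            (mul_nonneg hC'.le (wt_rpow_pos ξ _).le)
        calc ∑ i ∈ Finset.univ.erase ℓ, ‖P ℓ i ξ‖ * ‖u ξ i‖
            ≤ ∑ _i ∈ Finset.univ.erase ℓ, (C' * wt ξ ^ (τ ℓ / 2)) * (C * wt ξ ^ t) :=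
              Finset.sum_le_sum hterm
          _ = ((Finset.univ.erase ℓ).card : ℝ) * ((C' * wt ξ ^ (τ ℓ / 2)) * (C * wt ξ ^ t)) := by
              rw [Finset.sum_const, nsmul_eq_mul]
          _ ≤ (m : ℝ) * ((C' * wt ξ ^ (τ ℓ / 2)) * (C * wt ξ ^ t)) := by
              have hcard : ((Finset.univ.erase ℓ).card : ℝ) ≤ (m : ℝ) := by
                have h1 := Finset.card_erase_le (s := (Finset.univ : Finset (Fin m))) (a := ℓ)
                have h2 : (Finset.univ : Finset (Fin m)).card = m :=
                  Finset.card_univ.trans (Fintype.card_fin m)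
                exact_mod_cast h1.trans_eq h2
              have hnn : (0:ℝ) ≤ (C' * wt ξ ^ (τ ℓ / 2)) * (C * wt ξ ^ t) :=
                mul_nonneg (mul_nonneg hC'.le (wt_rpow_pos ξ _).le)
                  (mul_nonneg hC.le (wt_rpow_pos ξ _).le)
              exact mul_le_mul_of_nonneg_right hcard hnn
          _ = B * wt ξ ^ (τ ℓ / 2 + t) := by
              rw [Real.rpow_add (wt_pos ξ), hBdef]; ring
      -- exponent bounds
      have he1 : -(M / 2) ≤ t' + k ℓ / 2 := by
        have h1 : |2 * t' + k ℓ| ≤ ∑ ℓ' : Fin m, |2 * t' + k ℓ'| :=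
          Finset.single_le_sum (f := fun ℓ' => |2 * t' + k ℓ'|)
            (fun ℓ' _ => abs_nonneg _) (Finset.mem_univ ℓ)
        have h2 : -(2 * t' + k ℓ) ≤ |2 * t' + k ℓ| := neg_le_abs _
        have h3 : 1 + ∑ ℓ' : Fin m, |2 * t' + k ℓ'| = M := hMdef.symm
        linarith
      have he2 : τ ℓ / 2 + t ≤ t' + k ℓ / 2 := by
        have := hδle ℓ; rw [ht']; linarith
      have c1 : Cm * wt ξ ^ (k ℓ / 2) * ‖u ξ ℓ‖ ≤ ‖P ℓ ℓ ξ‖ * ‖u ξ ℓ‖ := by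
        have hdg := hdiag ξ hξ1 ℓ
        have hle : Cm * wt ξ ^ (k ℓ / 2) ≤ ‖P ℓ ℓ ξ‖ := by
          have := hCmle ℓ
          nlinarith [hw.le]
        exact mul_le_mul_of_nonneg_right hle (norm_nonneg _)
      have c2 : l2norm ((Matrix.of fun j i => P j i ξ).mulVec (u ξ))
            + ∑ i ∈ Finset.univ.erase ℓ, ‖P ℓ i ξ‖ * ‖u ξ i‖
          ≤ D * wt ξ ^ (-(M / 2)) + B * wt ξ ^ (τ ℓ / 2 + t) :=
        add_le_add (hDle ξ) hsum2
      have c3 : D * wt ξ ^ (-(M / 2)) ≤ D * wt ξ ^ (t' + k ℓ / 2) :=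
        mul_le_mul_of_nonneg_left (wt_rpow_le ξ he1) hD.le
      have c4 : B * wt ξ ^ (τ ℓ / 2 + t) ≤ B * wt ξ ^ (t' + k ℓ / 2) :=
        mul_le_mul_of_nonneg_left (wt_rpow_le ξ he2) hB.le
      have c5 : wt ξ ^ (t' + k ℓ / 2) = wt ξ ^ t' * wt ξ ^ (k ℓ / 2) :=
        Real.rpow_add (wt_pos ξ) _ _
      have hfull : wt ξ ^ (k ℓ / 2) * (Cm * ‖u ξ ℓ‖)
          ≤ wt ξ ^ (k ℓ / 2) * ((D + B) * wt ξ ^ t') := by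
        have e1 : wt ξ ^ (k ℓ / 2) * (Cm * ‖u ξ ℓ‖)
            = Cm * wt ξ ^ (k ℓ / 2) * ‖u ξ ℓ‖ := by ring
        have e2 : wt ξ ^ (k ℓ / 2) * ((D + B) * wt ξ ^ t')
            = D * wt ξ ^ (t' + k ℓ / 2) + B * wt ξ ^ (t' + k ℓ / 2) := by
          rw [c5]; ring
        rw [e1, e2]
        calc Cm * wt ξ ^ (k ℓ / 2) * ‖u ξ ℓ‖
            ≤ ‖P ℓ ℓ ξ‖ * ‖u ξ ℓ‖ := c1
          _ ≤ l2norm ((Matrix.of fun j i => P j i ξ).mulVec (u ξ))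
              + ∑ i ∈ Finset.univ.erase ℓ, ‖P ℓ i ξ‖ * ‖u ξ i‖ := hnorm1
          _ ≤ D * wt ξ ^ (-(M / 2)) + B * wt ξ ^ (τ ℓ / 2 + t) := c2
          _ ≤ D * wt ξ ^ (t' + k ℓ / 2) + B * wt ξ ^ (t' + k ℓ / 2) := add_le_add c3 c4
      have H2 : Cm * ‖u ξ ℓ‖ ≤ (D + B) * wt ξ ^ t' :=
        le_of_mul_le_mul_left hfull hw
      rw [div_mul_eq_mul_div, le_div_iff₀ hCm]
      linarith [mul_comm ‖u ξ ℓ‖ Cm, H2]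
    calc l2norm (u ξ) ≤ ∑ ℓ : Fin m, ‖u ξ ℓ‖ := l2norm_le_sum _
      _ ≤ ∑ _ℓ : Fin m, (D + B) / Cm * wt ξ ^ t' :=
          Finset.sum_le_sum fun ℓ _ => comp ℓ
      _ = (m : ℝ) * ((D + B) / Cm) * wt ξ ^ t' := by
          rw [Finset.sum_const, nsmul_eq_mul]
          simp [Finset.card_univ]
          ring
  -- bootstrap: iterate the step
  have boot : ∀ n : ℕ, ∃ C2 : ℝ, 0 < C2 ∧
      ∀ ξ, l2norm (u ξ) ≤ C2 * wt ξ ^ (N / 2 - n * δ) := by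
    intro n
    induction n with
    | zero =>
      refine ⟨C0, hC0, fun ξ => ?_⟩
      simpa using hu0 ξ
    | succ n ih =>
      obtain ⟨C2, hC2, hb⟩ := ih
      obtain ⟨C3, hC3, hb3⟩ := step (N / 2 - n * δ) C2 hC2 hb
      refine ⟨C3, hC3, fun ξ => ?_⟩
      have : (N / 2 - (n:ℝ) * δ - δ) = N / 2 - ((n:ℕ) + 1 : ℕ) * δ := by
        push_cast; ring
      rw [← this]
      exact hb3 ξ
  -- conclude rapid decay
  intro M hM
  obtain ⟨n, hn⟩ := exists_nat_ge ((N / 2 + M / 2) / δ)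
  have hexp : N / 2 - n * δ ≤ -(M / 2) := by
    have h1 : N / 2 + M / 2 ≤ n * δ := by
      rw [div_le_iff₀ hδpos] at hn
      linarith
    linarith
  obtain ⟨C2, hC2, hb⟩ := boot n
  refine ⟨C2, hC2, fun ξ => ?_⟩
  exact (hb ξ).trans (mul_le_mul_of_nonneg_left (wt_rpow_le ξ hexp) hC2.le)
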